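/- arXiv:1904.08473 — 4 statements merged into one kernel-verified Lean document; each statement's English description precedes it below -/
import Mathlib

section
/- Let M = (S, A, P, r, γ) be a finite MDP with γ ∈ (0,1), p0 an initial state distribution, and μ a behavior policy. For every policy π (extended arbitrarily to the absorbing state s_abs), the normalized expected return of π in the original MDP is at least its normalized expected return in the augmented MDP: R_M^π ≥ R_{M_μ}^π. -/
open scoped BigOperators
open Finset

noncomputable section

/-- One-step state-distribution update under policy `π` (here `π s a` denotes `π(a|s)`). -/
def nextDist {S A : Type} [Fintype S] [Fintype A]
    (P : S → A → S → ℝ) (π : S → A → ℝ) (d : S → ℝ) : S → ℝ :=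
  fun s' => ∑ s, ∑ a, d s * π s a * P s a s'

/-- The time-`t` state distribution `d_t^π`. -/
def stateDist {S A : Type} [Fintype S] [Fintype A]
    (P : S → A → S → ℝ) (π : S → A → ℝ) (p0 : S → ℝ) : ℕ → S → ℝ
  | 0 => p0
  | t + 1 => nextDist P π (stateDist P π p0 t)

/-- The discounted state distribution `d^π`. -/
def discDist {S A : Type} [Fintype S] [Fintype A]
    (γ : ℝ) (P : S → A → S → ℝ) (π : S → A → ℝ) (p0 : S → ℝ) : S → ℝ :=
  fun s => (1 - γ) * ∑' t : ℕ, γ ^ t * stateDist P π p0 t s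

/-- The normalized expected return `R^π_M`. -/
def expReturn {S A : Type} [Fintype S] [Fintype A]
    (γ : ℝ) (P : S → A → S → ℝ) (r : S → A → ℝ) (π : S → A → ℝ) (p0 : S → ℝ) : ℝ :=
  (1 - γ) * ∑' t : ℕ, γ ^ t * ∑ s, ∑ a, stateDist P π p0 t s * π s a * r s a

/-- Transition kernel of the augmented MDP `M_μ` on `Option S`, where `none` plays the
role of the absorbing state `s_abs` and `dμ` is the discounted state distribution of
the behavior policy `μ`.  States `some s` with `dμ s = 0` are given no incoming mass,
so the reachable state space is exactly `S_μ ∪ {s_abs}`. -/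
def augP {S A : Type} [Fintype S] [Fintype A]
    (P : S → A → S → ℝ) (dμ : S → ℝ) (μ : S → A → ℝ) : Option S → A → Option S → ℝ
  | none, _, none => 1
  | none, _, some _ => 0
  | some s, a, some s' => if 0 < dμ s * μ s a ∧ 0 < dμ s' then P s a s' else 0
  | some s, a, none =>
      if 0 < dμ s * μ s a then ∑ s' ∈ Finset.univ.filter (fun s' => ¬ 0 < dμ s'), P s a s'
      else 1

/-- Reward function of the augmented MDP `M_μ`. -/
def augR {S A : Type} (r : S → A → ℝ) (dμ : S → ℝ) (μ : S → A → ℝ) : Option S → A → ℝ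
  | none, _ => 0
  | some s, a => if 0 < dμ s * μ s a then r s a else 0

/-- Initial state distribution of the augmented MDP `M_μ`. -/
def augp0 {S : Type} (p0 : S → ℝ) : Option S → ℝ
  | none => 0
  | some s => p0 s

/-! The augmented MDP is a copy of `M` on `S_μ` in which every transition leaving `SA_μ` or `S_μ`
is redirected to a rewardless absorbing state.  Its transitions between ordinary states are
pointwise at most `P` and the absorbing state never returns mass, so by induction on `t` the
time-`t` mass it puts on `s` is at most `d_t^π(s)`.  Its rewards are pointwise at most `r` and
vanish at `s_abs`, so every discounted summand of `R_{M_μ}^π` is at most the corresponding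
summand of `R_M^π`; both series are dominated by `∑ γ^t`. -/

/-- `expReturn γ P r π p0` unfolds to `(1 - γ) * ∑' t, γ ^ t * stepReward P r π p0 t`. -/
def stepReward {S A : Type} [Fintype S] [Fintype A]
    (P : S → A → S → ℝ) (r : S → A → ℝ) (π : S → A → ℝ) (p0 : S → ℝ) (t : ℕ) : ℝ :=
  ∑ s, ∑ a, stateDist P π p0 t s * π s a * r s a

lemma tsum_geometric_mul_le_tsum {γ : ℝ} (hγ0 : 0 ≤ γ) (hγ1 : γ < 1) {f g : ℕ → ℝ}
    (hg : ∀ t, 0 ≤ g t) (hgf : ∀ t, g t ≤ f t) (hf : ∀ t, f t ≤ 1) :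
    ∑' t, γ ^ t * g t ≤ ∑' t, γ ^ t * f t := by
  have hle : ∀ t, γ ^ t * g t ≤ γ ^ t * f t := fun t =>
    mul_le_mul_of_nonneg_left (hgf t) (pow_nonneg hγ0 t)
  have hf_summable : Summable fun t => γ ^ t * f t :=
    (summable_geometric_of_lt_one hγ0 hγ1).of_nonneg_of_le
      (fun t => (mul_nonneg (pow_nonneg hγ0 t) (hg t)).trans (hle t))
      (fun t => mul_le_of_le_one_right (pow_nonneg hγ0 t) (hf t))
  have hg_summable : Summable fun t => γ ^ t * g t :=
    hf_summable.of_nonneg_of_le (fun t => mul_nonneg (pow_nonneg hγ0 t) (hg t)) hle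
  exact hg_summable.tsum_le_tsum hle hf_summable

section StateDist

variable {S A : Type} [Fintype S] [Fintype A]
  {P : S → A → S → ℝ} {π : S → A → ℝ} {p0 : S → ℝ}

lemma stateDist_nonneg (hP0 : ∀ s a s', 0 ≤ P s a s') (hπ0 : ∀ s a, 0 ≤ π s a)
    (hp00 : ∀ s, 0 ≤ p0 s) (t : ℕ) (s : S) : 0 ≤ stateDist P π p0 t s := by
  induction t generalizing s with
  | zero => exact hp00 s
  | succ t ih =>
    exact sum_nonneg fun s _ => sum_nonneg fun a _ =>
      mul_nonneg (mul_nonneg (ih s) (hπ0 s a)) (hP0 s a _)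

lemma sum_stateDist (hP1 : ∀ s a, ∑ s', P s a s' = 1) (hπ1 : ∀ s, ∑ a, π s a = 1)
    (hp01 : ∑ s, p0 s = 1) (t : ℕ) : ∑ s, stateDist P π p0 t s = 1 := by
  induction t with
  | zero => exact hp01
  | succ t ih =>
    calc ∑ s', stateDist P π p0 (t + 1) s'
        = ∑ s, ∑ a, stateDist P π p0 t s * π s a * ∑ s', P s a s' := by
          simp only [stateDist, nextDist, mul_sum]
          rw [sum_comm]
          exact sum_congr rfl fun s _ => sum_comm
      _ = 1 := by simp only [hP1, mul_one, ← mul_sum, hπ1, ih]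

lemma stepReward_nonneg (hP0 : ∀ s a s', 0 ≤ P s a s') (hπ0 : ∀ s a, 0 ≤ π s a)
    (hp00 : ∀ s, 0 ≤ p0 s) {r : S → A → ℝ} (hr0 : ∀ s a, 0 ≤ r s a) (t : ℕ) :
    0 ≤ stepReward P r π p0 t :=
  sum_nonneg fun s _ => sum_nonneg fun a _ =>
    mul_nonneg (mul_nonneg (stateDist_nonneg hP0 hπ0 hp00 t s) (hπ0 s a)) (hr0 s a)

lemma stepReward_le_one (hP0 : ∀ s a s', 0 ≤ P s a s') (hP1 : ∀ s a, ∑ s', P s a s' = 1)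
    (hπ0 : ∀ s a, 0 ≤ π s a) (hπ1 : ∀ s, ∑ a, π s a = 1)
    (hp00 : ∀ s, 0 ≤ p0 s) (hp01 : ∑ s, p0 s = 1)
    {r : S → A → ℝ} (hr1 : ∀ s a, r s a ≤ 1) (t : ℕ) :
    stepReward P r π p0 t ≤ 1 :=
  calc stepReward P r π p0 t
      ≤ ∑ s, ∑ a, stateDist P π p0 t s * π s a * 1 :=
        sum_le_sum fun s _ => sum_le_sum fun a _ => mul_le_mul_of_nonneg_left (hr1 s a)
          (mul_nonneg (stateDist_nonneg hP0 hπ0 hp00 t s) (hπ0 s a))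
    _ = 1 := by simp only [mul_one, ← mul_sum, hπ1, sum_stateDist hP1 hπ1 hp01 t]

variable {P' : Option S → A → Option S → ℝ} {π' : Option S → A → ℝ} {p0' : Option S → ℝ}

lemma stateDist_some_le (hP0 : ∀ s a s', 0 ≤ P s a s') (hπ0 : ∀ s a, 0 ≤ π s a)
    (hp00 : ∀ s, 0 ≤ p0 s) (hP'0 : ∀ s a s', 0 ≤ P' (some s) a (some s'))
    (hP'le : ∀ s a s', P' (some s) a (some s') ≤ P s a s')
    (hP'none : ∀ a s', P' none a (some s') = 0) (hπ' : ∀ s a, π' (some s) a = π s a)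
    (hp0' : ∀ s, p0' (some s) ≤ p0 s) (t : ℕ) (s : S) :
    stateDist P' π' p0' t (some s) ≤ stateDist P π p0 t s := by
  induction t generalizing s with
  | zero => exact hp0' s
  | succ t ih =>
    simp only [stateDist, nextDist, Fintype.sum_option, hP'none, mul_zero, sum_const_zero,
      zero_add, hπ']
    exact sum_le_sum fun x _ => sum_le_sum fun a _ =>
      mul_le_mul (mul_le_mul_of_nonneg_right (ih x) (hπ0 x a)) (hP'le x a s) (hP'0 x a s)
        (mul_nonneg (stateDist_nonneg hP0 hπ0 hp00 t x) (hπ0 x a))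

lemma stepReward_le_of_some_le (hP0 : ∀ s a s', 0 ≤ P s a s') (hπ0 : ∀ s a, 0 ≤ π s a)
    (hp00 : ∀ s, 0 ≤ p0 s) (hP'0 : ∀ s a s', 0 ≤ P' (some s) a (some s'))
    (hP'le : ∀ s a s', P' (some s) a (some s') ≤ P s a s')
    (hP'none : ∀ a s', P' none a (some s') = 0) (hπ' : ∀ s a, π' (some s) a = π s a)
    (hp0' : ∀ s, p0' (some s) ≤ p0 s) {r : S → A → ℝ} {r' : Option S → A → ℝ}
    (hr'0 : ∀ s a, 0 ≤ r' (some s) a) (hr'le : ∀ s a, r' (some s) a ≤ r s a)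
    (hr'none : ∀ a, r' none a = 0) (t : ℕ) :
    stepReward P' r' π' p0' t ≤ stepReward P r π p0 t := by
  simp only [stepReward, Fintype.sum_option, hr'none, mul_zero, sum_const_zero, zero_add, hπ']
  exact sum_le_sum fun s _ => sum_le_sum fun a _ =>
    mul_le_mul (mul_le_mul_of_nonneg_right
        (stateDist_some_le hP0 hπ0 hp00 hP'0 hP'le hP'none hπ' hp0' t s) (hπ0 s a))
      (hr'le s a) (hr'0 s a) (mul_nonneg (stateDist_nonneg hP0 hπ0 hp00 t s) (hπ0 s a))

end StateDist

section Augmented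

variable {S A : Type} (dμ : S → ℝ) (μ : S → A → ℝ)

lemma augP_nonneg [Fintype S] [Fintype A] {P : S → A → S → ℝ} (hP0 : ∀ s a s', 0 ≤ P s a s')
    (x : Option S) (a : A) (y : Option S) : 0 ≤ augP P dμ μ x a y := by
  rcases x with _ | s <;> rcases y with _ | s' <;> simp only [augP]
  · exact zero_le_one
  · exact le_rfl
  · split_ifs
    exacts [sum_nonneg fun _ _ => hP0 _ _ _, zero_le_one]
  · split_ifs
    exacts [hP0 s a s', le_rfl]

lemma augP_some_some_le [Fintype S] [Fintype A] {P : S → A → S → ℝ} (hP0 : ∀ s a s', 0 ≤ P s a s')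
    (s : S) (a : A) (s' : S) : augP P dμ μ (some s) a (some s') ≤ P s a s' := by
  simp only [augP]
  split_ifs
  exacts [le_rfl, hP0 s a s']

lemma augR_nonneg {r : S → A → ℝ} (hr0 : ∀ s a, 0 ≤ r s a) (x : Option S) (a : A) :
    0 ≤ augR r dμ μ x a := by
  rcases x with _ | s
  · exact le_rfl
  · simp only [augR]
    split_ifs
    exacts [hr0 s a, le_rfl]

lemma augR_some_le {r : S → A → ℝ} (hr0 : ∀ s a, 0 ≤ r s a) (s : S) (a : A) :
    augR r dμ μ (some s) a ≤ r s a := by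
  simp only [augR]
  split_ifs
  exacts [le_rfl, hr0 s a]

end Augmented

lemma augp0_nonneg {S : Type} {p0 : S → ℝ} (hp00 : ∀ s, 0 ≤ p0 s) (x : Option S) :
    0 ≤ augp0 p0 x := by
  cases x
  exacts [le_rfl, hp00 _]

theorem augmented_return_le_general {S A : Type} [Fintype S] [Fintype A]
    (γ : ℝ) (hγ0 : 0 < γ) (hγ1 : γ < 1)
    (P : S → A → S → ℝ) (hP0 : ∀ s a s', 0 ≤ P s a s') (hP1 : ∀ s a, ∑ s', P s a s' = 1)
    (r : S → A → ℝ) (hr0 : ∀ s a, 0 ≤ r s a) (hr1 : ∀ s a, r s a ≤ 1)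
    (p0 : S → ℝ) (hp00 : ∀ s, 0 ≤ p0 s) (hp01 : ∑ s, p0 s = 1)
    (μ : S → A → ℝ)
    (π : S → A → ℝ) (hπ0 : ∀ s a, 0 ≤ π s a) (hπ1 : ∀ s, ∑ a, π s a = 1)
    (πa : Option S → A → ℝ) (hπa0 : ∀ s a, 0 ≤ πa s a)
    (hagree : ∀ s a, πa (some s) a = π s a) :
    expReturn γ (augP P (discDist γ P μ p0) μ) (augR r (discDist γ P μ p0) μ) πa (augp0 p0)
      ≤ expReturn γ P r π p0 := by
  set dμ := discDist γ P μ p0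
  refine mul_le_mul_of_nonneg_left ?_ (sub_nonneg.2 hγ1.le)
  exact tsum_geometric_mul_le_tsum hγ0.le hγ1
    (stepReward_nonneg (augP_nonneg dμ μ hP0) hπa0 (augp0_nonneg hp00) (augR_nonneg dμ μ hr0))
    (stepReward_le_of_some_le hP0 hπ0 hp00 (fun _ _ _ => augP_nonneg dμ μ hP0 _ _ _)
      (augP_some_some_le dμ μ hP0) (fun _ _ => rfl) hagree (fun _ => le_refl _)
      (fun _ _ => augR_nonneg dμ μ hr0 _ _) (augR_some_le dμ μ hr0) (fun _ => rfl))
    (stepReward_le_one hP0 hP1 hπ0 hπ1 hp00 hp01 hr1)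

/-- For every policy `π` (extended arbitrarily to the absorbing state by a
policy `πa` on `Option S`), the normalized expected return of `π` in the original MDP `M`
is at least its normalized expected return in the augmented MDP `M_μ`. -/
theorem augmented_return_le {S A : Type} [Fintype S] [Fintype A]
    (γ : ℝ) (hγ0 : 0 < γ) (hγ1 : γ < 1)
    (P : S → A → S → ℝ) (hP0 : ∀ s a s', 0 ≤ P s a s') (hP1 : ∀ s a, ∑ s', P s a s' = 1)
    (r : S → A → ℝ) (hr0 : ∀ s a, 0 ≤ r s a) (hr1 : ∀ s a, r s a ≤ 1)
    (p0 : S → ℝ) (hp00 : ∀ s, 0 ≤ p0 s) (hp01 : ∑ s, p0 s = 1)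
    (μ : S → A → ℝ) (hμ0 : ∀ s a, 0 ≤ μ s a) (hμ1 : ∀ s, ∑ a, μ s a = 1)
    (π : S → A → ℝ) (hπ0 : ∀ s a, 0 ≤ π s a) (hπ1 : ∀ s, ∑ a, π s a = 1)
    (πa : Option S → A → ℝ) (hπa0 : ∀ s a, 0 ≤ πa s a) (hπa1 : ∀ s, ∑ a, πa s a = 1)
    (hagree : ∀ s a, πa (some s) a = π s a) :
    expReturn γ (augP P (discDist γ P μ p0) μ) (augR r (discDist γ P μ p0) μ) πa (augp0 p0)
      ≤ expReturn γ P r π p0 :=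
  augmented_return_le_general γ hγ0 hγ1 P hP0 hP1 r hr0 hr1 p0 hp00 hp01 μ π hπ0 hπ1 πa hπa0 hagree
end
end

section
/- Let (S, A, P, r, γ) be a finite MDP with γ ∈ (0,1), p0 an initial state distribution, and let π and μ be policies such that d^μ(s) > 0 for all s ∈ S and μ(a|s) > 0 for all (s,a). If w : S → ℝ satisfies L(w, f) = 0 for every function f : S → ℝ, then w(s) = d^π(s)/d^μ(s) for all s. -/
/-!
Write `T_ρ = nextDist P ρ`. Testing `L(w, ·)` against the indicator of a state, and using that
`d^μ` satisfies the Bellman flow equation `d = γ T_μ d + (1 - γ) p0`, shows that `L(w, ·) = 0`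
says exactly that `w · d^μ` satisfies the flow equation `d = γ T_π d + (1 - γ) p0` of `π`. So
does `d^π`, by shifting its defining series by one step. Since `T_π` is a non-expansion in `ℓ¹`,
the difference `e` of two solutions satisfies `‖e‖₁ = γ ‖T_π e‖₁ ≤ γ ‖e‖₁`, hence vanishes.
-/

open scoped BigOperators
open Finset

noncomputable section

/-- The functional `L(w,f)` of Liu et al. (discounted case), with `s ~ d^μ`, `a ~ μ(·|s)`,
`s' ~ P(·|s,a)`:
`L(w,f) = γ E[(w(s)π(a|s)/μ(a|s) − w(s')) f(s')] + (1−γ) E_{s~p0}[(1 − w(s)) f(s)]`. -/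
def Lfun {S A : Type} [Fintype S] [Fintype A]
    (γ : ℝ) (P : S → A → S → ℝ) (π μ : S → A → ℝ) (dμ p0 : S → ℝ) (w f : S → ℝ) : ℝ :=
  γ * ∑ s, ∑ a, ∑ s', dμ s * μ s a * P s a s' * (w s * (π s a / μ s a) - w s') * f s' +
    (1 - γ) * ∑ s, p0 s * (1 - w s) * f s

section MDP

variable {S A : Type} [Fintype S] [Fintype A]

lemma stateDist_zero (P : S → A → S → ℝ) (ρ : S → A → ℝ) (p0 : S → ℝ) :
    stateDist P ρ p0 0 = p0 :=
  rfl

lemma nextDist_mul_left (P : S → A → S → ℝ) (ρ : S → A → ℝ) (k : ℝ) (d : S → ℝ) (s' : S) :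
    nextDist P ρ (fun s => k * d s) s' = k * nextDist P ρ d s' := by
  simp only [nextDist, Finset.mul_sum, mul_assoc]

lemma nextDist_sub (P : S → A → S → ℝ) (ρ : S → A → ℝ) (d d' : S → ℝ) (s' : S) :
    nextDist P ρ (fun s => d s - d' s) s' = nextDist P ρ d s' - nextDist P ρ d' s' := by
  simp only [nextDist, ← Finset.sum_sub_distrib, sub_mul]

lemma nextDist_tsum (P : S → A → S → ℝ) (ρ : S → A → ℝ) {c : ℕ → S → ℝ}
    (hc : ∀ s, Summable fun t => c t s) (s' : S) :
    nextDist P ρ (fun s => ∑' t, c t s) s' = ∑' t, nextDist P ρ (c t) s' := by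
  have hterm : ∀ s a, Summable fun t => c t s * ρ s a * P s a s' :=
    fun s a => ((hc s).mul_right _).mul_right _
  simp only [nextDist, ← tsum_mul_right]
  rw [Summable.tsum_finsetSum fun s _ => summable_sum fun a _ => hterm s a]
  exact Finset.sum_congr rfl fun s _ => (Summable.tsum_finsetSum fun a _ => hterm s a).symm

lemma nextDist_nonneg {P : S → A → S → ℝ} {ρ : S → A → ℝ} (hP : ∀ s a s', 0 ≤ P s a s')
    (hρ : ∀ s a, 0 ≤ ρ s a) {d : S → ℝ} (hd : ∀ s, 0 ≤ d s) (s' : S) :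
    0 ≤ nextDist P ρ d s' :=
  Finset.sum_nonneg fun s _ => Finset.sum_nonneg fun a _ =>
    mul_nonneg (mul_nonneg (hd s) (hρ s a)) (hP s a s')

lemma sum_nextDist {P : S → A → S → ℝ} {ρ : S → A → ℝ} (hP : ∀ s a, ∑ s', P s a s' = 1)
    (hρ : ∀ s, ∑ a, ρ s a = 1) (d : S → ℝ) :
    ∑ s', nextDist P ρ d s' = ∑ s, d s := by
  unfold nextDist
  rw [Finset.sum_comm]
  refine Finset.sum_congr rfl fun s _ => ?_
  rw [Finset.sum_comm]
  simp only [← Finset.mul_sum, hP, mul_one, hρ]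

lemma nextDist_mem_stdSimplex {P : S → A → S → ℝ} {ρ : S → A → ℝ}
    (hP : ∀ s a, P s a ∈ stdSimplex ℝ S) (hρ : ∀ s, ρ s ∈ stdSimplex ℝ A) {d : S → ℝ}
    (hd : d ∈ stdSimplex ℝ S) : nextDist P ρ d ∈ stdSimplex ℝ S :=
  ⟨nextDist_nonneg (fun s a => (hP s a).1) (fun s => (hρ s).1) hd.1,
    (sum_nextDist (fun s a => (hP s a).2) (fun s => (hρ s).2) d).trans hd.2⟩

lemma stateDist_mem_stdSimplex {P : S → A → S → ℝ} {ρ : S → A → ℝ}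
    (hP : ∀ s a, P s a ∈ stdSimplex ℝ S) (hρ : ∀ s, ρ s ∈ stdSimplex ℝ A) {p0 : S → ℝ}
    (hp0 : p0 ∈ stdSimplex ℝ S) (t : ℕ) : stateDist P ρ p0 t ∈ stdSimplex ℝ S := by
  induction t with
  | zero => exact hp0
  | succ t ih => exact nextDist_mem_stdSimplex hP hρ ih

lemma summable_pow_mul_stateDist {γ : ℝ} (hγ : |γ| < 1) {P : S → A → S → ℝ}
    {ρ : S → A → ℝ} (hP : ∀ s a, P s a ∈ stdSimplex ℝ S) (hρ : ∀ s, ρ s ∈ stdSimplex ℝ A)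
    {p0 : S → ℝ} (hp0 : p0 ∈ stdSimplex ℝ S) (s : S) :
    Summable fun t => γ ^ t * stateDist P ρ p0 t s := by
  refine (summable_geometric_of_lt_one (abs_nonneg γ) hγ).of_norm_bounded fun t => ?_
  obtain ⟨hd0, hd1⟩ := mem_Icc_of_mem_stdSimplex (stateDist_mem_stdSimplex hP hρ hp0 t) s
  rw [norm_mul, norm_pow, Real.norm_eq_abs, Real.norm_eq_abs, abs_of_nonneg hd0]
  exact mul_le_of_le_one_right (pow_nonneg (abs_nonneg γ) t) hd1

def IsBellmanFlow (γ : ℝ) (P : S → A → S → ℝ) (ρ : S → A → ℝ) (p0 d : S → ℝ) : Prop :=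
  ∀ s', d s' = γ * nextDist P ρ d s' + (1 - γ) * p0 s'

lemma isBellmanFlow_discDist {γ : ℝ} (hγ : |γ| < 1) {P : S → A → S → ℝ}
    {ρ : S → A → ℝ} (hP : ∀ s a, P s a ∈ stdSimplex ℝ S) (hρ : ∀ s, ρ s ∈ stdSimplex ℝ A)
    {p0 : S → ℝ} (hp0 : p0 ∈ stdSimplex ℝ S) :
    IsBellmanFlow γ P ρ p0 (discDist γ P ρ p0) := by
  intro s'
  have hsum := summable_pow_mul_stateDist hγ hP hρ hp0
  have hnext : nextDist P ρ (fun s => ∑' t, γ ^ t * stateDist P ρ p0 t s) s'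
      = ∑' t, γ ^ t * stateDist P ρ p0 (t + 1) s' := by
    rw [nextDist_tsum P ρ hsum]
    exact tsum_congr fun t => nextDist_mul_left P ρ _ _ s'
  have hshift : ∑' t, γ ^ t * stateDist P ρ p0 t s'
      = p0 s' + γ * ∑' t, γ ^ t * stateDist P ρ p0 (t + 1) s' := by
    rw [(hsum s').tsum_eq_zero_add, ← tsum_mul_left]
    simp only [pow_zero, one_mul, stateDist_zero, pow_succ, mul_comm _ γ, mul_assoc]
  have hdisc : discDist γ P ρ p0 = fun s => (1 - γ) * ∑' t, γ ^ t * stateDist P ρ p0 t s := rfl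
  simp only [hdisc, nextDist_mul_left, hnext, hshift]
  ring

lemma abs_nextDist_le {P : S → A → S → ℝ} {ρ : S → A → ℝ} (hP : ∀ s a s', 0 ≤ P s a s')
    (hρ : ∀ s a, 0 ≤ ρ s a) (e : S → ℝ) (s' : S) :
    |nextDist P ρ e s'| ≤ nextDist P ρ (fun s => |e s|) s' := by
  refine (Finset.abs_sum_le_sum_abs _ _).trans (Finset.sum_le_sum fun s _ => ?_)
  refine (Finset.abs_sum_le_sum_abs _ _).trans_eq (Finset.sum_congr rfl fun a _ => ?_)
  rw [abs_mul, abs_mul, abs_of_nonneg (hρ s a), abs_of_nonneg (hP s a s')]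

lemma sum_abs_nextDist_le {P : S → A → S → ℝ} {ρ : S → A → ℝ}
    (hP : ∀ s a, P s a ∈ stdSimplex ℝ S) (hρ : ∀ s, ρ s ∈ stdSimplex ℝ A) (e : S → ℝ) :
    ∑ s', |nextDist P ρ e s'| ≤ ∑ s, |e s| :=
  (Finset.sum_le_sum fun s' _ =>
      abs_nextDist_le (fun s a => (hP s a).1) (fun s => (hρ s).1) e s').trans_eq
    (sum_nextDist (fun s a => (hP s a).2) (fun s => (hρ s).2) _)

lemma eq_zero_of_forall_eq_mul_nextDist {γ : ℝ} (hγ : |γ| < 1) {P : S → A → S → ℝ}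
    {ρ : S → A → ℝ} (hP : ∀ s a, P s a ∈ stdSimplex ℝ S) (hρ : ∀ s, ρ s ∈ stdSimplex ℝ A)
    {e : S → ℝ} (he : ∀ s', e s' = γ * nextDist P ρ e s') : e = 0 := by
  have hcontract : ∑ s, |e s| ≤ |γ| * ∑ s, |e s| :=
    calc ∑ s, |e s| = |γ| * ∑ s', |nextDist P ρ e s'| := by
          simp only [Finset.mul_sum, ← abs_mul, ← he]
      _ ≤ |γ| * ∑ s, |e s| :=
          mul_le_mul_of_nonneg_left (sum_abs_nextDist_le hP hρ e) (abs_nonneg γ)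
  have hnonneg : ∀ s ∈ Finset.univ, 0 ≤ |e s| := fun s _ => abs_nonneg (e s)
  have hnorm : ∑ s, |e s| = 0 := by
    nlinarith [Finset.sum_nonneg hnonneg]
  funext s
  exact abs_eq_zero.mp ((Finset.sum_eq_zero_iff_of_nonneg hnonneg).mp hnorm s (Finset.mem_univ s))

lemma IsBellmanFlow.unique {γ : ℝ} (hγ : |γ| < 1) {P : S → A → S → ℝ} {ρ : S → A → ℝ}
    (hP : ∀ s a, P s a ∈ stdSimplex ℝ S) (hρ : ∀ s, ρ s ∈ stdSimplex ℝ A) {p0 d d' : S → ℝ}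
    (hd : IsBellmanFlow γ P ρ p0 d) (hd' : IsBellmanFlow γ P ρ p0 d') : d = d' := by
  have hdiff : ∀ s', d s' - d' s' = γ * nextDist P ρ (fun s => d s - d' s) s' := fun s' => by
    rw [nextDist_sub, hd s', hd' s']
    ring
  exact sub_eq_zero.mp (eq_zero_of_forall_eq_mul_nextDist hγ hP hρ hdiff)

lemma Lfun_eq_sum_mul (γ : ℝ) (P : S → A → S → ℝ) (π : S → A → ℝ) {μ : S → A → ℝ}
    (hμ : ∀ s a, μ s a ≠ 0) (dμ p0 w f : S → ℝ) :
    Lfun γ P π μ dμ p0 w f = ∑ s', (γ * nextDist P π (fun s => w s * dμ s) s'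
      + (1 - γ) * p0 s' - w s' * (γ * nextDist P μ dμ s' + (1 - γ) * p0 s')) * f s' := by
  have hterm : ∀ s a s', dμ s * μ s a * P s a s' * (w s * (π s a / μ s a) - w s') * f s'
      = (w s * dμ s * π s a * P s a s' - w s' * (dμ s * μ s a * P s a s')) * f s' := by
    intro s a s'
    field_simp [hμ s a]
  have hswap : ∑ s, ∑ a, ∑ s', dμ s * μ s a * P s a s' * (w s * (π s a / μ s a) - w s') * f s'
      = ∑ s', (nextDist P π (fun s => w s * dμ s) s' - w s' * nextDist P μ dμ s') * f s' := by
    simp only [hterm, nextDist, Finset.mul_sum, ← Finset.sum_sub_distrib, Finset.sum_mul]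
    exact (Finset.sum_congr rfl fun _ _ => Finset.sum_comm).trans Finset.sum_comm
  rw [Lfun, hswap, Finset.mul_sum, Finset.mul_sum, ← Finset.sum_add_distrib]
  exact Finset.sum_congr rfl fun s' _ => by ring

lemma isBellmanFlow_mul_of_Lfun_eq_zero {γ : ℝ} {P : S → A → S → ℝ} {π μ : S → A → ℝ}
    (hμ : ∀ s a, μ s a ≠ 0) {dμ p0 w : S → ℝ} (hdμ : IsBellmanFlow γ P μ p0 dμ)
    (hw : ∀ f, Lfun γ P π μ dμ p0 w f = 0) :
    IsBellmanFlow γ P π p0 (fun s => w s * dμ s) := by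
  classical
  intro s'
  have h := hw (Pi.single s' 1)
  simp only [Lfun_eq_sum_mul γ P π hμ, ← hdμ s', Pi.single_apply, mul_ite, mul_one, mul_zero,
    Finset.sum_ite_eq', Finset.mem_univ, if_true] at h
  linarith

end MDP

/-- If `d^μ(s) > 0` for all `s` and `μ(a|s) > 0` for all `(s,a)`, and
`w : S → ℝ` satisfies `L(w,f) = 0` for every `f : S → ℝ`, then `w(s) = d^π(s)/d^μ(s)`
for all `s`. -/
theorem L_eq_zero_implies_ratio {S A : Type} [Fintype S] [Fintype A]
    (γ : ℝ) (hγ0 : 0 < γ) (hγ1 : γ < 1)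
    (P : S → A → S → ℝ) (hP0 : ∀ s a s', 0 ≤ P s a s') (hP1 : ∀ s a, ∑ s', P s a s' = 1)
    (p0 : S → ℝ) (hp00 : ∀ s, 0 ≤ p0 s) (hp01 : ∑ s, p0 s = 1)
    (π : S → A → ℝ) (hπ0 : ∀ s a, 0 ≤ π s a) (hπ1 : ∀ s, ∑ a, π s a = 1)
    (μ : S → A → ℝ) (hμ0 : ∀ s a, 0 < μ s a) (hμ1 : ∀ s, ∑ a, μ s a = 1)
    (hdμ : ∀ s, 0 < discDist γ P μ p0 s)
    (w : S → ℝ) (hw : ∀ f : S → ℝ, Lfun γ P π μ (discDist γ P μ p0) p0 w f = 0) :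
    ∀ s, w s = discDist γ P π p0 s / discDist γ P μ p0 s := by
  have hγ : |γ| < 1 := abs_lt.mpr ⟨by linarith, hγ1⟩
  have hP : ∀ s a, P s a ∈ stdSimplex ℝ S := fun s a => ⟨hP0 s a, hP1 s a⟩
  have hπ : ∀ s, π s ∈ stdSimplex ℝ A := fun s => ⟨hπ0 s, hπ1 s⟩
  have hμ : ∀ s, μ s ∈ stdSimplex ℝ A := fun s => ⟨fun a => (hμ0 s a).le, hμ1 s⟩
  have hp0 : p0 ∈ stdSimplex ℝ S := ⟨hp00, hp01⟩
  have hflow : IsBellmanFlow γ P π p0 (fun s => w s * discDist γ P μ p0 s) :=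
    isBellmanFlow_mul_of_Lfun_eq_zero (fun s a => (hμ0 s a).ne')
      (isBellmanFlow_discDist hγ hP hμ hp0) hw
  have hratio := hflow.unique hγ hP hπ (isBellmanFlow_discDist hγ hP hπ hp0)
  intro s
  rw [eq_div_iff (hdμ s).ne']
  exact congrFun hratio s
end
end

section
/- Let S, A be finite sets, P(s'|s,a) a transition kernel, and π, μ policies with μ(a|s) > 0 for all (s,a). Let d^μ be a probability distribution on S with d^μ(s) > 0 for all s which is stationary for the μ-induced chain, i.e., Σ_{s,a} d^μ(s) μ(a|s) P(s'|s,a) = d^μ(s') for all s'. For w : S → ℝ define L₁(w,f) = Σ_{s,a,s'} d^μ(s) μ(a|s) P(s'|s,a) [ w(s) π(a|s)/μ(a|s) − w(s') ] f(s'). Then L₁(w,f) = 0 for all f : S → ℝ if and only if the signed measure q(s) = d^μ(s) w(s) is stationary for the π-induced chain, i.e., Σ_{s,a} q(s) π(a|s) P(s'|s,a) = q(s') for all s'. Consequently, if w ≥ 0 with Σ_s d^μ(s) w(s) = 1 and the π-induced chain has a unique stationary distribution d^π, then L₁(w,f) = 0 for all f holds if and only if w(s) = d^π(s)/d^μ(s)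 for all s. -/
/-!
Since `μ > 0`, the importance weight `π/μ` cancels and, after the summation over `(s, a)` is moved
inside, `L₁(w, f)` is the pairing of `f` with `q P_π − d^μ P_μ · w`, where `q = d^μ w`. Stationarity
of `d^μ` turns this into `q P_π − q`, and a vector pairing to zero with every `f` vanishes. For the
second part, `q` is then a probability distribution stationary for `P_π`, so uniqueness gives
`q = d^π`.
-/

open scoped BigOperators
open Finset

noncomputable section

/-- The average-reward (γ = 1) functional `L₁(w,f)` of Liu et al., with `s ~ d^μ`
(stationary for the `μ`-induced chain), `a ~ μ(·|s)`, `s' ~ P(·|s,a)`: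
`L₁(w,f) = E[(w(s)π(a|s)/μ(a|s) − w(s')) f(s')]`. -/
def Lone {S A : Type} [Fintype S] [Fintype A]
    (P : S → A → S → ℝ) (π μ : S → A → ℝ) (dμ : S → ℝ) (w f : S → ℝ) : ℝ :=
  ∑ s, ∑ a, ∑ s', dμ s * μ s a * P s a s' * (w s * (π s a / μ s a) - w s') * f s'

open Matrix

section

variable {S A : Type} [Fintype S] [Fintype A]

/-- The row vector `q P_π`. -/
def pushMeasure (P : S → A → S → ℝ) (π : S → A → ℝ) (q : S → ℝ) (s' : S) : ℝ :=
  ∑ s, ∑ a, q s * π s a * P s a s'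

lemma sum_sum_sum_mul_eq_dotProduct (g : S → A → S → ℝ) (f : S → ℝ) :
    ∑ s, ∑ a, ∑ s', g s a s' * f s' = (fun s' => ∑ s, ∑ a, g s a s') ⬝ᵥ f := by
  simp only [dotProduct, Finset.sum_mul]
  exact (Finset.sum_congr rfl fun _ _ => Finset.sum_comm).trans Finset.sum_comm

lemma Lone_eq_dotProduct (P : S → A → S → ℝ) (π μ : S → A → ℝ) (hμ : ∀ s a, μ s a ≠ 0)
    (dμ w f : S → ℝ) :
    Lone P π μ dμ w f = (pushMeasure P π (dμ * w) - pushMeasure P μ dμ * w) ⬝ᵥ f := by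
  have hdiff : pushMeasure P π (dμ * w) - pushMeasure P μ dμ * w = fun s' =>
      ∑ s, ∑ a, (dμ s * w s * π s a * P s a s' - dμ s * μ s a * P s a s' * w s') := by
    ext s'
    simp only [pushMeasure, Pi.sub_apply, Pi.mul_apply, Finset.sum_sub_distrib, Finset.sum_mul]
  rw [hdiff, ← sum_sum_sum_mul_eq_dotProduct]
  refine Finset.sum_congr rfl fun s _ => Finset.sum_congr rfl fun a _ =>
    Finset.sum_congr rfl fun s' _ => ?_
  have := hμ s a
  field_simp

lemma forall_Lone_eq_zero_iff (P : S → A → S → ℝ) (π μ : S → A → ℝ) (hμ : ∀ s a, μ s a ≠ 0)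
    {dμ : S → ℝ} (hdμ : pushMeasure P μ dμ = dμ) (w : S → ℝ) :
    (∀ f, Lone P π μ dμ w f = 0) ↔ pushMeasure P π (dμ * w) = dμ * w := by
  simp only [Lone_eq_dotProduct P π μ hμ, hdμ, dotProduct_eq_zero_iff, sub_eq_zero]

end

theorem Lone_eq_zero_iff_stationary_general {S A : Type} [Fintype S] [Fintype A]
    (P : S → A → S → ℝ)
    (π : S → A → ℝ)
    (μ : S → A → ℝ) (hμ0 : ∀ s a, 0 < μ s a)
    (dμ : S → ℝ) (hdμ0 : ∀ s, 0 < dμ s)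
    (hstat : ∀ s', ∑ s, ∑ a, dμ s * μ s a * P s a s' = dμ s')
    (w : S → ℝ) :
    ((∀ f : S → ℝ, Lone P π μ dμ w f = 0) ↔
        ∀ s', ∑ s, ∑ a, (dμ s * w s) * π s a * P s a s' = dμ s' * w s') ∧
      ((∀ s, 0 ≤ w s) → (∑ s, dμ s * w s = 1) →
        ∀ dπ : S → ℝ, (∀ s, 0 ≤ dπ s) → (∑ s, dπ s = 1) →
          (∀ s', ∑ s, ∑ a, dπ s * π s a * P s a s' = dπ s') →
          (∀ q : S → ℝ, (∀ s, 0 ≤ q s) → (∑ s, q s = 1) →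
            (∀ s', ∑ s, ∑ a, q s * π s a * P s a s' = q s') → q = dπ) →
          ((∀ f : S → ℝ, Lone P π μ dμ w f = 0) ↔ ∀ s, w s = dπ s / dμ s)) := by
  have hstationary := forall_Lone_eq_zero_iff P π μ (fun s a => (hμ0 s a).ne') (funext hstat) w
  simp only [funext_iff, pushMeasure, Pi.mul_apply] at hstationary
  refine ⟨hstationary, fun hw0 hw1 dπ _ _ hdπ huniq => ?_⟩
  have hw_iff : (∀ s, w s = dπ s / dμ s) ↔ ∀ s, dμ s * w s = dπ s :=
    forall_congr' fun s => by rw [eq_div_iff (hdμ0 s).ne', mul_comm]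
  rw [hstationary, hw_iff]
  constructor
  · intro hq
    exact congrFun (huniq _ (fun s => mul_nonneg (hdμ0 s).le (hw0 s)) hw1 hq)
  · intro hq s'
    simp only [hq]
    exact hdπ s'

/-- `L₁(w,f) = 0` for all `f` iff the signed measure `q(s) = d^μ(s) w(s)`
is stationary for the `π`-induced chain.  Consequently, if `w ≥ 0` is normalized by
`Σ_s d^μ(s) w(s) = 1` and the `π`-induced chain has a unique stationary distribution `d^π`,
then `L₁(w,·) ≡ 0` iff `w(s) = d^π(s)/d^μ(s)` for all `s`. -/
theorem Lone_eq_zero_iff_stationary {S A : Type} [Fintype S] [Fintype A]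
    (P : S → A → S → ℝ) (hP0 : ∀ s a s', 0 ≤ P s a s') (hP1 : ∀ s a, ∑ s', P s a s' = 1)
    (π : S → A → ℝ) (hπ0 : ∀ s a, 0 ≤ π s a) (hπ1 : ∀ s, ∑ a, π s a = 1)
    (μ : S → A → ℝ) (hμ0 : ∀ s a, 0 < μ s a) (hμ1 : ∀ s, ∑ a, μ s a = 1)
    (dμ : S → ℝ) (hdμ0 : ∀ s, 0 < dμ s) (hdμ1 : ∑ s, dμ s = 1)
    (hstat : ∀ s', ∑ s, ∑ a, dμ s * μ s a * P s a s' = dμ s')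
    (w : S → ℝ) :
    ((∀ f : S → ℝ, Lone P π μ dμ w f = 0) ↔
        ∀ s', ∑ s, ∑ a, (dμ s * w s) * π s a * P s a s' = dμ s' * w s') ∧
      ((∀ s, 0 ≤ w s) → (∑ s, dμ s * w s = 1) →
        ∀ dπ : S → ℝ, (∀ s, 0 ≤ dπ s) → (∑ s, dπ s = 1) →
          (∀ s', ∑ s, ∑ a, dπ s * π s a * P s a s' = dπ s') →
          (∀ q : S → ℝ, (∀ s, 0 ≤ q s) → (∑ s, q s = 1) →
            (∀ s', ∑ s, ∑ a, q s * π s a * P s a s' = q s') → q = dπ) →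
          ((∀ f : S → ℝ, Lone P π μ dμ w f = 0) ↔ ∀ s, w s = dπ s / dμ s)) :=
  Lone_eq_zero_iff_stationary_general P π μ hμ0 dμ hdμ0 hstat w
end
end

section
/- Let f : ℝ^d → ℝ be differentiable with L-Lipschitz gradient (L > 0) and bounded below by f* ∈ ℝ. On a probability space, let X_1 = x_1 be deterministic and X_{k+1} = X_k − (1/L)(∇f(X_k) + D_k) for k = 1, …, K, where the random perturbations D_k satisfy, conditionally on the history F_k = σ(X_1, …, X_k): ‖E[D_k | F_k]‖ ≤ B_k almost surely and E[‖D_k‖² | F_k] ≤ 2(σ_k² + B_k²) almost surely, for constants B_k, σ_k ≥ 0. Then (1/K) Σ_{k=1}^K E[‖∇f(X_k)‖²] ≤ (2L/K)(f(x_1) − f*) + (2/K) Σ_{k=1}^K (σ_k² + B_k²). -/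
open MeasureTheory

noncomputable section

/-!
With step size `1/L`, the descent lemma `f y ≤ f x + ⟪∇f x, y - x⟫ + L/2 ‖y - x‖²` turns each
step into the pointwise inequality
`‖∇f(X k)‖² ≤ 2L (f(X k) - f(X (k+1))) + ‖D k‖²`,
because the cross terms between the gradient and the noise cancel exactly.
Taking expectations, the `f`-terms telescope to at most `2L (f x₁ - f*)`, and the tower property
bounds `E‖D k‖²` by `2(σ k² + B k²)`.
-/

section Descent

open InnerProductSpace

variable {E : Type*} [NormedAddCommGroup E] [InnerProductSpace ℝ E] [CompleteSpace E]
  {f : E → ℝ} {L : ℝ}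

theorem hasDerivAt_comp_add_smul {x v : E} {t : ℝ} (hf : DifferentiableAt ℝ f (x + t • v)) :
    HasDerivAt (fun s : ℝ => f (x + s • v)) ⟪gradient f (x + t • v), v⟫_ℝ t := by
  have hline : HasDerivAt (fun s : ℝ => x + s • v) v t := by
    simpa using ((hasDerivAt_id t).smul_const v).const_add x
  exact (hf.hasGradientAt.hasFDerivAt.comp_hasDerivAt t hline).congr_deriv
    (by simp)

theorem le_add_inner_gradient_add_of_lipschitz_gradient (hf : Differentiable ℝ f)
    (hlip : ∀ x y, ‖gradient f x - gradient f y‖ ≤ L * ‖x - y‖) (x y : E) :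
    f y ≤ f x + ⟪gradient f x, y - x⟫_ℝ + L / 2 * ‖y - x‖ ^ 2 := by
  set v := y - x
  set c := ⟪gradient f x, v⟫_ℝ
  set φ : ℝ → ℝ := fun t => f (x + t • v) - t * c - t ^ 2 * (L / 2 * ‖v‖ ^ 2)
  have hφ : ∀ t, HasDerivAt φ
      (⟪gradient f (x + t • v), v⟫_ℝ - c - 2 * t * (L / 2 * ‖v‖ ^ 2)) t :=
    fun t => ((hasDerivAt_comp_add_smul (hf _)).sub (hasDerivAt_mul_const c)).sub
      (by simpa using (hasDerivAt_pow 2 t).mul_const (L / 2 * ‖v‖ ^ 2))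
  have hanti : AntitoneOn φ (Set.Icc 0 1) := by
    refine antitoneOn_of_deriv_nonpos (convex_Icc 0 1)
      (fun t _ => (hφ t).continuousAt.continuousWithinAt)
      (fun t _ => (hφ t).differentiableAt.differentiableWithinAt) fun t ht => ?_
    rw [interior_Icc] at ht
    have hgrowth : ⟪gradient f (x + t • v) - gradient f x, v⟫_ℝ ≤ L * t * ‖v‖ ^ 2 :=
      calc ⟪gradient f (x + t • v) - gradient f x, v⟫_ℝ
          ≤ ‖gradient f (x + t • v) - gradient f x‖ * ‖v‖ := real_inner_le_norm _ _
        _ ≤ L * ‖x + t • v - x‖ * ‖v‖ := by gcongr; exact hlip _ _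
        _ = L * t * ‖v‖ ^ 2 := by
          rw [add_sub_cancel_left, norm_smul, Real.norm_eq_abs, abs_of_pos ht.1]; ring
    rw [inner_sub_left] at hgrowth
    rw [(hφ t).deriv]
    linarith
  have h01 := hanti (Set.left_mem_Icc.2 zero_le_one) (Set.right_mem_Icc.2 zero_le_one)
    zero_le_one
  simp only [φ, v, one_smul, zero_smul, add_zero, add_sub_cancel] at h01
  linarith

theorem sq_norm_gradient_le_of_step (hL : 0 < L) (hf : Differentiable ℝ f)
    (hlip : ∀ x y, ‖gradient f x - gradient f y‖ ≤ L * ‖x - y‖) (x e : E) :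
    ‖gradient f x‖ ^ 2 ≤
      2 * L * (f x - f (x - (1 / L) • (gradient f x + e))) + ‖e‖ ^ 2 := by
  set g := gradient f x
  have hdesc := le_add_inner_gradient_add_of_lipschitz_gradient hf hlip x
    (x - (1 / L) • (g + e))
  have hsq : ‖g + e - g‖ ^ 2 = ‖g + e‖ ^ 2 - 2 * ⟪g + e, g⟫_ℝ + ‖g‖ ^ 2 :=
    norm_sub_sq_real _ _
  rw [sub_sub_cancel_left, inner_neg_right, real_inner_smul_right, norm_neg, norm_smul,
    Real.norm_eq_abs, abs_of_pos (one_div_pos.2 hL)] at hdesc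
  rw [add_sub_cancel_left, real_inner_comm] at hsq
  have hgap : 2 * L * (-(1 / L * ⟪g, g + e⟫_ℝ) + L / 2 * (1 / L * ‖g + e‖) ^ 2) =
      ‖e‖ ^ 2 - ‖g‖ ^ 2 := by
    field_simp
    linarith
  have := mul_le_mul_of_nonneg_left hdesc (by positivity : 0 ≤ 2 * L)
  linarith

end Descent

section Expectation

open Finset

variable {Ω : Type*} {m₀ : MeasurableSpace Ω} {μ : Measure Ω} {a G Q : ℕ → Ω → ℝ}
  {c l : ℝ} {K : ℕ}

theorem integrable_of_le_mul_sub_add [IsFiniteMeasure μ] (hc : 0 < c)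
    (hG : ∀ k ω, 0 ≤ G k ω) (hlb : ∀ k ω, l ≤ a k ω) (hmeas : ∀ k, AEStronglyMeasurable (a k) μ)
    (ha₁ : Integrable (a 1) μ) (hQ : ∀ k, Integrable (Q k) μ)
    (hle : ∀ k, 1 ≤ k → k ≤ K → ∀ ω, G k ω ≤ c * (a k ω - a (k + 1) ω) + Q k ω) :
    ∀ k, 1 ≤ k → k ≤ K + 1 → Integrable (a k) μ := by
  intro k hk
  induction k, hk using Nat.le_induction with
  | base => exact fun _ => ha₁
  | succ k hk ih =>
    intro hkK
    have hup : ∀ ω, a (k + 1) ω ≤ a k ω + Q k ω / c := fun ω => by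
      rw [← sub_le_iff_le_add', le_div_iff₀ hc]
      linarith [hle k hk (by omega) ω, hG k ω]
    exact integrable_of_le_of_le (hmeas _) (ae_of_all _ (hlb _)) (ae_of_all _ hup)
      (integrable_const l) ((ih (by omega)).add ((hQ k).div_const c))

theorem sum_integral_le_of_le_mul_sub_add [IsProbabilityMeasure μ] (hc : 0 < c)
    (hG : ∀ k ω, 0 ≤ G k ω) (hlb : ∀ k ω, l ≤ a k ω)
    (hmeas : ∀ k, AEStronglyMeasurable (a k) μ) (ha₁ : Integrable (a 1) μ)
    (hQ : ∀ k, Integrable (Q k) μ)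
    (hle : ∀ k, 1 ≤ k → k ≤ K → ∀ ω, G k ω ≤ c * (a k ω - a (k + 1) ω) + Q k ω) :
    ∑ k ∈ Icc 1 K, ∫ ω, G k ω ∂μ ≤
      c * (∫ ω, a 1 ω ∂μ - l) + ∑ k ∈ Icc 1 K, ∫ ω, Q k ω ∂μ := by
  have ha := integrable_of_le_mul_sub_add hc hG hlb hmeas ha₁ hQ hle
  set A : ℕ → ℝ := fun k => ∫ ω, a k ω ∂μ
  have hstep : ∀ k ∈ Icc 1 K, ∫ ω, G k ω ∂μ ≤ c * (A k - A (k + 1)) + ∫ ω, Q k ω ∂μ := by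
    intro k hk
    obtain ⟨h1, h2⟩ := mem_Icc.1 hk
    have hdiff : Integrable (fun ω => a k ω - a (k + 1) ω) μ :=
      (ha k h1 (by omega)).sub (ha (k + 1) (by omega) (by omega))
    calc ∫ ω, G k ω ∂μ ≤ ∫ ω, c * (a k ω - a (k + 1) ω) + Q k ω ∂μ :=
          integral_mono_of_nonneg (ae_of_all _ (hG k)) ((hdiff.const_mul c).add (hQ k))
            (ae_of_all _ (hle k h1 h2))
      _ = c * (A k - A (k + 1)) + ∫ ω, Q k ω ∂μ := by
          rw [integral_add (hdiff.const_mul c) (hQ k), integral_const_mul,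
            integral_sub (ha k h1 (by omega)) (ha (k + 1) (by omega) (by omega))]
  have htel : ∑ k ∈ Icc 1 K, (A k - A (k + 1)) = A 1 - A (K + 1) := by
    rw [← Ico_add_one_right_eq_Icc, ← neg_sub, ← sum_Ico_sub A (by omega : 1 ≤ K + 1),
      ← sum_neg_distrib]
    simp only [neg_sub]
  have hlast : l ≤ A (K + 1) := by
    simpa using integral_mono (integrable_const l) (ha (K + 1) (by omega) le_rfl) (hlb (K + 1))
  calc ∑ k ∈ Icc 1 K, ∫ ω, G k ω ∂μ
      ≤ ∑ k ∈ Icc 1 K, (c * (A k - A (k + 1)) + ∫ ω, Q k ω ∂μ) := sum_le_sum hstep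
    _ = c * (A 1 - A (K + 1)) + ∑ k ∈ Icc 1 K, ∫ ω, Q k ω ∂μ := by
        rw [sum_add_distrib, ← mul_sum, htel]
    _ ≤ c * (A 1 - l) + ∑ k ∈ Icc 1 K, ∫ ω, Q k ω ∂μ := by gcongr

theorem integral_le_of_ae_condExp_le [IsProbabilityMeasure μ] {m : MeasurableSpace Ω}
    (hm : m ≤ m₀) {g : Ω → ℝ} {C : ℝ} (h : ∀ᵐ ω ∂μ, μ[g | m] ω ≤ C) :
    ∫ ω, g ω ∂μ ≤ C := by
  rw [← integral_condExp hm]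
  simpa using integral_mono_ae integrable_condExp (integrable_const C) h

end Expectation

theorem sgd_biased_oracle_convergence_general {d : ℕ} {Ω : Type} [MeasurableSpace Ω]
    (ℙ : Measure Ω) [IsProbabilityMeasure ℙ]
    (f : EuclideanSpace ℝ (Fin d) → ℝ) (L : ℝ) (hL : 0 < L)
    (hf : Differentiable ℝ f)
    (hlip : ∀ x y, ‖gradient f x - gradient f y‖ ≤ L * ‖x - y‖)
    (fstar : ℝ) (hbdd : ∀ x, fstar ≤ f x)
    (K : ℕ) (x1 : EuclideanSpace ℝ (Fin d))
    (X D : ℕ → Ω → EuclideanSpace ℝ (Fin d))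
    (hX1 : X 1 = fun _ => x1)
    (hXmeas : ∀ k, Measurable (X k))
    (hrec : ∀ k, 1 ≤ k → k ≤ K →
      X (k + 1) = fun ω => X k ω - (1 / L) • (gradient f (X k ω) + D k ω))
    (B σ' : ℕ → ℝ)
    (F : ℕ → MeasurableSpace Ω)
    (hF : ∀ k, F k = ⨆ i ∈ Finset.Icc 1 k, MeasurableSpace.comap (X i) inferInstance)
    (hDsq : ∀ k, Integrable (fun ω => ‖D k ω‖ ^ 2) ℙ)
    (hvar : ∀ k, 1 ≤ k → k ≤ K → ∀ᵐ ω ∂ℙ,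
      (ℙ[(fun ω' => ‖D k ω'‖ ^ 2) | F k]) ω ≤ 2 * (σ' k ^ 2 + B k ^ 2)) :
    (1 / (K : ℝ)) * ∑ k ∈ Finset.Icc 1 K, ∫ ω, ‖gradient f (X k ω)‖ ^ 2 ∂ℙ ≤
      (2 * L / (K : ℝ)) * (f x1 - fstar) +
        (2 / (K : ℝ)) * ∑ k ∈ Finset.Icc 1 K, (σ' k ^ 2 + B k ^ 2) := by
  have hstep : ∀ k, 1 ≤ k → k ≤ K → ∀ ω, ‖gradient f (X k ω)‖ ^ 2 ≤
      2 * L * (f (X k ω) - f (X (k + 1) ω)) + ‖D k ω‖ ^ 2 := fun k h1 h2 ω => by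
    rw [hrec k h1 h2]
    exact sq_norm_gradient_le_of_step hL hf hlip _ _
  have hsum := sum_integral_le_of_le_mul_sub_add (μ := ℙ) (by positivity : 0 < 2 * L)
    (fun k ω => sq_nonneg ‖gradient f (X k ω)‖) (fun k ω => hbdd (X k ω))
    (fun k => (hf.continuous.measurable.comp (hXmeas k)).aestronglyMeasurable)
    (by rw [hX1]; exact integrable_const _) hDsq hstep
  have hFle : ∀ k, F k ≤ ‹MeasurableSpace Ω› := fun k =>
    hF k ▸ iSup₂_le fun i _ => (hXmeas i).comap_le
  have hnoise : ∑ k ∈ Finset.Icc 1 K, ∫ ω, ‖D k ω‖ ^ 2 ∂ℙ ≤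
      ∑ k ∈ Finset.Icc 1 K, 2 * (σ' k ^ 2 + B k ^ 2) :=
    Finset.sum_le_sum fun k hk => integral_le_of_ae_condExp_le (hFle k)
      (hvar k (Finset.mem_Icc.1 hk).1 (Finset.mem_Icc.1 hk).2)
  rw [hX1, integral_const, probReal_univ, one_smul] at hsum
  have htotal : ∑ k ∈ Finset.Icc 1 K, ∫ ω, ‖gradient f (X k ω)‖ ^ 2 ∂ℙ ≤
      2 * L * (f x1 - fstar) + ∑ k ∈ Finset.Icc 1 K, 2 * (σ' k ^ 2 + B k ^ 2) := by
    linarith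
  calc (1 / (K : ℝ)) * ∑ k ∈ Finset.Icc 1 K, ∫ ω, ‖gradient f (X k ω)‖ ^ 2 ∂ℙ
      ≤ (1 / (K : ℝ)) *
          (2 * L * (f x1 - fstar) + ∑ k ∈ Finset.Icc 1 K, 2 * (σ' k ^ 2 + B k ^ 2)) := by
        gcongr
    _ = _ := by rw [← Finset.mul_sum]; ring

/-- Convergence of stochastic gradient descent with step size `1/L` and a
biased noisy gradient oracle: if `f : ℝ^d → ℝ` is differentiable with `L`-Lipschitz gradient
and bounded below by `f*`, `X 1 = x₁` is deterministic,
`X (k+1) = X k − (1/L)(∇f(X k) + D k)` for `k = 1, …, K`, and conditionally on the history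
`F k = σ(X 1, …, X k)` the perturbations satisfy `‖E[D k | F k]‖ ≤ B k` and
`E[‖D k‖² | F k] ≤ 2(σ k² + B k²)` almost surely, then
`(1/K) Σ_{k=1}^K E‖∇f(X k)‖² ≤ (2L/K)(f(x₁) − f*) + (2/K) Σ_{k=1}^K (σ k² + B k²)`. -/
theorem sgd_biased_oracle_convergence {d : ℕ} {Ω : Type} [MeasurableSpace Ω]
    (ℙ : Measure Ω) [IsProbabilityMeasure ℙ]
    (f : EuclideanSpace ℝ (Fin d) → ℝ) (L : ℝ) (hL : 0 < L)
    (hf : Differentiable ℝ f)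
    (hlip : ∀ x y, ‖gradient f x - gradient f y‖ ≤ L * ‖x - y‖)
    (fstar : ℝ) (hbdd : ∀ x, fstar ≤ f x)
    (K : ℕ) (x1 : EuclideanSpace ℝ (Fin d))
    (X D : ℕ → Ω → EuclideanSpace ℝ (Fin d))
    (hX1 : X 1 = fun _ => x1)
    (hXmeas : ∀ k, Measurable (X k)) (hDmeas : ∀ k, Measurable (D k))
    (hrec : ∀ k, 1 ≤ k → k ≤ K →
      X (k + 1) = fun ω => X k ω - (1 / L) • (gradient f (X k ω) + D k ω))
    (B σ' : ℕ → ℝ) (hB : ∀ k, 0 ≤ B k) (hσ : ∀ k, 0 ≤ σ' k)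
    (F : ℕ → MeasurableSpace Ω)
    (hF : ∀ k, F k = ⨆ i ∈ Finset.Icc 1 k, MeasurableSpace.comap (X i) inferInstance)
    (hDint : ∀ k, Integrable (D k) ℙ)
    (hDsq : ∀ k, Integrable (fun ω => ‖D k ω‖ ^ 2) ℙ)
    (hbias : ∀ k, 1 ≤ k → k ≤ K → ∀ᵐ ω ∂ℙ, ‖(ℙ[D k | F k]) ω‖ ≤ B k)
    (hvar : ∀ k, 1 ≤ k → k ≤ K → ∀ᵐ ω ∂ℙ,
      (ℙ[(fun ω' => ‖D k ω'‖ ^ 2) | F k]) ω ≤ 2 * (σ' k ^ 2 + B k ^ 2)) :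
    (1 / (K : ℝ)) * ∑ k ∈ Finset.Icc 1 K, ∫ ω, ‖gradient f (X k ω)‖ ^ 2 ∂ℙ ≤
      (2 * L / (K : ℝ)) * (f x1 - fstar) +
        (2 / (K : ℝ)) * ∑ k ∈ Finset.Icc 1 K, (σ' k ^ 2 + B k ^ 2) :=
  sgd_biased_oracle_convergence_general ℙ f L hL hf hlip fstar hbdd K x1 X D hX1 hXmeas hrec B σ' F
    hF hDsq hvar
end
end
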